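/- Fix an integer K ≥ 1, a vector α ∈ (0,∞)^K, and β > 0, and define h(z, m, s) := ∏_{i=1}^K h_{α_i}^C(z_i, m_i, s) for z ∈ (0,∞)^K, m ∈ ℕ^K, s ≥ 0. Then for all such z, m, s the following identity holds: ∑_{i=1}^K [ (1/2)(α_i − β z_i) ∂h/∂z_i(z,m,s) + (1/2) z_i ∂²h/∂z_i²(z,m,s) ] = ((β+s)/2) ∑_{i=1}^K m_i [ h(z, m − e_i, s) − h(z, m, s) ] − (s(β+s)/2) ∂h/∂s(z,m,s), where terms with m_i = 0 are absent and the s-derivative is the derivative of the smooth map s ↦ h(z,m,s) (defined for s > −β). This is the local duality identity showing that K independent Cox–Ingersoll–Ross generators C_i f(z_i) = (1/2)(α_i − β z_i) f'(z_i) + (1/2) z_i f''(z_i) are dual, with respect to the duality function h, to the generator of the death process jumping from m to m − e_i at rate m_i(β+s)/2 coupled with the deterministic evolution ds/dt = −(1/2)s(β+s) (Theorem 4.1). -/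

import Mathlib

/-! Each factor `hC β a · m s` is a constant times `z ^ m * exp (-s * z)`, so its first and second
`z`-derivatives and its `s`-derivative are `hC` itself times the rational factors `m / z - s`,
`(m / z - s) ^ 2 - m / z ^ 2` and `(a + m) / (β + s) - z`. The recursion `Γ (x + 1) = x Γ x`
turns lowering `m` into a rational factor as well, `m (β + s) z hC (m - 1) = m (a + m - 1) hC m`,
and then the one-site identity is an identity of rational functions. For the product, `∂/∂z_i`
only sees the `i`-th factor while `∂/∂s` obeys the product rule, so the theorem is the sum of
the one-site identities, each multiplied by the product of the other factors. -/

open Finset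

/-- The gamma-type duality function `h_a^C(z, m, s)`. -/
noncomputable def hC (β a z : ℝ) (m : ℕ) (s : ℝ) : ℝ :=
  (Real.Gamma a / Real.Gamma (a + m)) * ((β + s) / β) ^ a * (β + s) ^ m * z ^ m *
    Real.exp (-s * z)

/-- The product duality function `h(z, m, s) = ∏ᵢ h_{αᵢ}^C(zᵢ, mᵢ, s)`. -/
noncomputable def Hprod {K : ℕ} (α : Fin K → ℝ) (β : ℝ)
    (z : Fin K → ℝ) (m : Fin K → ℕ) (s : ℝ) : ℝ :=
  ∏ i, hC β (α i) (z i) (m i) s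

/-- Partial derivative in the `i`-th coordinate. -/
noncomputable def pd {K : ℕ} (f : (Fin K → ℝ) → ℝ) (i : Fin K) (x : Fin K → ℝ) : ℝ :=
  deriv (fun w => f (Function.update x i w)) (x i)

lemma natCast_mul_pow_sub_one (m : ℕ) {x : ℝ} (hx : x ≠ 0) :
    m * x ^ (m - 1) = m / x * x ^ m := by
  rcases Nat.eq_zero_or_pos m with rfl | hm
  · simp
  · rw [← pow_sub_one_mul hm.ne' x]
    field_simp

lemma hasDerivAt_hC_z (β a s : ℝ) (m : ℕ) {z : ℝ} (hz : z ≠ 0) :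
    HasDerivAt (fun w => hC β a w m s) ((m / z - s) * hC β a z m s) z := by
  have hpow : HasDerivAt (fun w : ℝ => w ^ m) (m / z * z ^ m) z :=
    (hasDerivAt_pow m z).congr_deriv (natCast_mul_pow_sub_one m hz)
  have hexp : HasDerivAt (fun w => Real.exp (-s * w)) (Real.exp (-s * z) * -s) z :=
    ((hasDerivAt_id z).const_mul (-s)).exp.congr_deriv (by simp)
  have hsplit : (fun w => hC β a w m s) = fun w =>
      Real.Gamma a / Real.Gamma (a + m) * ((β + s) / β) ^ a * (β + s) ^ m *
        (w ^ m * Real.exp (-s * w)) := by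
    funext w; unfold hC; ring
  rw [hsplit]
  exact ((hpow.fun_mul hexp).const_mul _).congr_deriv (by unfold hC; ring)

lemma hasDerivAt_deriv_hC_z (β a s : ℝ) (m : ℕ) {z : ℝ} (hz : z ≠ 0) :
    HasDerivAt (deriv fun w => hC β a w m s)
      (((m / z - s) ^ 2 - m / z ^ 2) * hC β a z m s) z := by
  have hderiv : deriv (fun w => hC β a w m s) =ᶠ[nhds z]
      fun w => (m / w - s) * hC β a w m s :=
    (isOpen_ne.eventually_mem hz).mono fun w hw => (hasDerivAt_hC_z β a s m hw).deriv
  have hlog : HasDerivAt (fun w : ℝ => m / w - s) (-(m / z ^ 2)) z := by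
    simpa [div_eq_mul_inv] using ((hasDerivAt_inv hz).const_mul (m : ℝ)).sub_const s
  refine ((hlog.mul (hasDerivAt_hC_z β a s m hz)).congr_of_eventuallyEq hderiv).congr_deriv ?_
  ring

lemma hasDerivAt_hC_s (β a z : ℝ) (m : ℕ) {s : ℝ} (hβ : 0 < β) (hβs : 0 < β + s) :
    HasDerivAt (fun u => hC β a z m u) (((a + m) / (β + s) - z) * hC β a z m s) s := by
  have hrpow : HasDerivAt (fun u : ℝ => ((β + u) / β) ^ a)
      (a / (β + s) * ((β + s) / β) ^ a) s := by
    have hlin : HasDerivAt (fun u : ℝ => (β + u) / β) (1 / β) s := by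
      simpa using ((hasDerivAt_id s).const_add β).div_const β
    refine (hlin.rpow_const (p := a) (Or.inl (by positivity))).congr_deriv ?_
    rw [Real.rpow_sub_one (by positivity)]
    field_simp
  have hpow : HasDerivAt (fun u : ℝ => (β + u) ^ m) (m / (β + s) * (β + s) ^ m) s := by
    simpa [natCast_mul_pow_sub_one m hβs.ne'] using
      ((hasDerivAt_id s).const_add β).fun_pow m
  have hexp : HasDerivAt (fun u => Real.exp (-u * z)) (Real.exp (-s * z) * -z) s := by
    simpa using ((hasDerivAt_id s).neg.mul_const z).exp
  have hsplit : (fun u => hC β a z m u) = fun u =>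
      Real.Gamma a / Real.Gamma (a + m) * z ^ m *
        (((β + u) / β) ^ a * (β + u) ^ m * Real.exp (-u * z)) := by
    funext u; unfold hC; ring
  rw [hsplit]
  exact (((hrpow.fun_mul hpow).fun_mul hexp).const_mul _).congr_deriv (by unfold hC; ring)

lemma natCast_mul_hC_sub_one (β a z s : ℝ) (m : ℕ) (ha : 0 < a) :
    m * ((β + s) * z * hC β a z (m - 1) s) = m * ((a + m - 1) * hC β a z m s) := by
  rcases Nat.eq_zero_or_pos m with rfl | hm
  · simp
  obtain ⟨k, rfl⟩ := Nat.exists_eq_add_one_of_ne_zero hm.ne'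
  have hk : 0 < a + k := by positivity
  have hΓ : Real.Gamma (a + ↑(k + 1)) = (a + k) * Real.Gamma (a + k) := by
    rw [← Real.Gamma_add_one hk.ne']; push_cast; ring_nf
  have := (Real.Gamma_pos_of_pos hk).ne'
  unfold hC
  rw [hΓ, Nat.add_sub_cancel]
  field_simp
  push_cast
  ring

lemma hC_duality (β a z s : ℝ) (m : ℕ) (ha : 0 < a) (hβ : 0 < β) (hβs : 0 < β + s)
    (hz : z ≠ 0) :
    1 / 2 * (a - β * z) * deriv (fun w => hC β a w m s) z
        + 1 / 2 * z * deriv (deriv fun w => hC β a w m s) z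
      = (β + s) / 2 * m * (hC β a z (m - 1) s - hC β a z m s)
        - s * (β + s) / 2 * deriv (fun u => hC β a z m u) s := by
  rw [(hasDerivAt_hC_z β a s m hz).deriv, (hasDerivAt_deriv_hC_z β a s m hz).deriv,
    (hasDerivAt_hC_s β a z m hβ hβs).deriv]
  have hpred := natCast_mul_hC_sub_one β a z s m ha
  field_simp
  linear_combination -hpred

lemma pd_mul_prod_erase {K : ℕ} (g : ℝ → ℝ) (f : Fin K → ℝ → ℝ) (i : Fin K) :
    pd (fun x => g (x i) * ∏ j ∈ univ.erase i, f j (x j)) i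
      = fun x => deriv g (x i) * ∏ j ∈ univ.erase i, f j (x j) := by
  funext x
  have hslice : ∀ w, ∏ j ∈ univ.erase i, f j (Function.update x i w j)
      = ∏ j ∈ univ.erase i, f j (x j) := fun w =>
    prod_congr rfl fun j hj => by rw [Function.update_of_ne (ne_of_mem_erase hj)]
  simp only [pd, Function.update_self, hslice]
  exact deriv_mul_const_field _

section Hprod

variable {K : ℕ} (α : Fin K → ℝ) (β : ℝ) (m : Fin K → ℕ) (s : ℝ) (i : Fin K)

lemma Hprod_eq_mul_prod_erase (z : Fin K → ℝ) :
    Hprod α β z m s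
      = hC β (α i) (z i) (m i) s * ∏ j ∈ univ.erase i, hC β (α j) (z j) (m j) s :=
  (mul_prod_erase univ (fun j => hC β (α j) (z j) (m j) s) (mem_univ i)).symm

lemma Hprod_sub_single (z : Fin K → ℝ) :
    Hprod α β z (m - Pi.single i 1) s
      = hC β (α i) (z i) (m i - 1) s * ∏ j ∈ univ.erase i, hC β (α j) (z j) (m j) s := by
  rw [Hprod_eq_mul_prod_erase _ _ _ _ i]
  congr 1
  · simp
  · exact prod_congr rfl fun j hj => by simp [Pi.single_eq_of_ne (ne_of_mem_erase hj)]

lemma pd_Hprod :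
    pd (fun z => Hprod α β z m s) i = fun z =>
      deriv (fun w => hC β (α i) w (m i) s) (z i)
        * ∏ j ∈ univ.erase i, hC β (α j) (z j) (m j) s := by
  simp only [Hprod_eq_mul_prod_erase α β m s i]
  exact pd_mul_prod_erase (fun w => hC β (α i) w (m i) s) (fun j w => hC β (α j) w (m j) s) i

lemma pd_pd_Hprod :
    pd (pd (fun z => Hprod α β z m s) i) i = fun z =>
      deriv (deriv fun w => hC β (α i) w (m i) s) (z i)
        * ∏ j ∈ univ.erase i, hC β (α j) (z j) (m j) s := by
  rw [pd_Hprod]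
  exact pd_mul_prod_erase (deriv fun w => hC β (α i) w (m i) s)
    (fun j w => hC β (α j) w (m j) s) i

end Hprod

theorem stmt0 (K : ℕ) (α : Fin K → ℝ) (hα : ∀ i, 0 < α i)
    (β : ℝ) (hβ : 0 < β) (z : Fin K → ℝ) (hz : ∀ i, 0 < z i)
    (m : Fin K → ℕ) (s : ℝ) (hs : 0 ≤ s) :
    ∑ i, ((1 / 2) * (α i - β * z i) * pd (fun w => Hprod α β w m s) i z
        + (1 / 2) * z i * pd (pd (fun w => Hprod α β w m s) i) i z)
      = (β + s) / 2 *
          ∑ i, (m i : ℝ) * (Hprod α β z (m - Pi.single i 1) s - Hprod α β z m s)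
        - s * (β + s) / 2 * deriv (fun u => Hprod α β z m u) s := by
  have hβs : 0 < β + s := by positivity
  have hds : deriv (fun u => Hprod α β z m u) s = ∑ i,
      (∏ j ∈ univ.erase i, hC β (α j) (z j) (m j) s)
        * deriv (fun u => hC β (α i) (z i) (m i) u) s :=
    deriv_fun_finsetProd fun i _ =>
      (hasDerivAt_hC_s β (α i) (z i) (m i) hβ hβs).differentiableAt
  rw [hds, mul_sum, mul_sum, ← sum_sub_distrib]
  refine sum_congr rfl fun i _ => ?_
  rw [pd_pd_Hprod, pd_Hprod, Hprod_sub_single, Hprod_eq_mul_prod_erase α β m s i z]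
  linear_combination (∏ j ∈ univ.erase i, hC β (α j) (z j) (m j) s) *
    hC_duality β (α i) (z i) s (m i) (hα i) hβ hβs (hz i).ne'
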